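/- For any constant c ∈ (0,1), the supremum over all real z > 1 of (z − z^{−c})/(z − z^c) equals (1 + c)/(1 − c). -/

import Mathlib

/-! For `z > 1` the ratio is at most `(1 + c) / (1 - c)`: after clearing denominators this is
the weighted AM–GM inequality `z ^ c ≤ (2c z + (1 - c) z ^ (-c)) / (1 + c)`. The bound is the
limit at `z = 1`, where numerator and denominator both vanish with derivatives `1 + c` and
`1 - c`. -/

open Real Set Filter Topology

theorem tendsto_div_of_hasDerivAt_of_eq_zero {f g : ℝ → ℝ} {a f' g' : ℝ}
    (hf : HasDerivAt f f' a) (hg : HasDerivAt g g' a) (hfa : f a = 0) (hga : g a = 0)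
    (hg' : g' ≠ 0) : Tendsto (fun z => f z / g z) (𝓝[≠] a) (𝓝 (f' / g')) := by
  refine (hf.tendsto_slope.div hg.tendsto_slope hg').congr' ?_
  filter_upwards [self_mem_nhdsWithin] with z hz
  rw [Pi.div_apply, slope_def_field, slope_def_field, hfa, hga, sub_zero, sub_zero,
    div_div_div_cancel_right₀ (sub_ne_zero.2 hz)]

theorem one_add_mul_rpow_le {z c : ℝ} (hz : 0 < z) (hc0 : 0 ≤ c) (hc1 : c ≤ 1) :
    (1 + c) * z ^ c ≤ 2 * c * z + (1 - c) * z ^ (-c) := by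
  have h1c : 0 < 1 + c := by linarith
  have amgm := geom_mean_le_arith_mean2_weighted (w₁ := 2 * c / (1 + c)) (w₂ := (1 - c) / (1 + c))
    (p₁ := z) (p₂ := z ^ (-c))
    (div_nonneg (by linarith) h1c.le) (div_nonneg (by linarith) h1c.le) hz.le
    (rpow_nonneg hz.le _) (by field_simp; ring)
  have hgeom : z ^ (2 * c / (1 + c)) * (z ^ (-c)) ^ ((1 - c) / (1 + c)) = z ^ c := by
    rw [← rpow_mul hz.le, ← rpow_add hz]
    congr 1
    field_simp
    ring
  rw [hgeom] at amgm
  calc (1 + c) * z ^ c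
      ≤ (1 + c) * (2 * c / (1 + c) * z + (1 - c) / (1 + c) * z ^ (-c)) := by gcongr
    _ = 2 * c * z + (1 - c) * z ^ (-c) := by field_simp

theorem sub_rpow_neg_div_sub_rpow_le {z c : ℝ} (hz : 1 < z) (hc0 : 0 ≤ c) (hc1 : c < 1) :
    (z - z ^ (-c)) / (z - z ^ c) ≤ (1 + c) / (1 - c) := by
  have hden : 0 < z - z ^ c := sub_pos.2 (rpow_lt_self_of_one_lt hz hc1)
  rw [div_le_div_iff₀ hden (by linarith)]
  nlinarith [one_add_mul_rpow_le (by linarith : 0 < z) hc0 hc1.le]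

theorem hasDerivAt_sub_rpow_const_one (p : ℝ) :
    HasDerivAt (fun z : ℝ => z - z ^ p) (1 - p) 1 :=
  ((hasDerivAt_id' 1).sub (hasDerivAt_rpow_const (Or.inl one_ne_zero))).congr_deriv
    (by rw [one_rpow, mul_one])

theorem tendsto_sub_rpow_neg_div_sub_rpow {c : ℝ} (hc : c ≠ 1) :
    Tendsto (fun z : ℝ => (z - z ^ (-c)) / (z - z ^ c)) (𝓝[≠] 1) (𝓝 ((1 + c) / (1 - c))) := by
  simpa using tendsto_div_of_hasDerivAt_of_eq_zero (hasDerivAt_sub_rpow_const_one (-c))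
    (hasDerivAt_sub_rpow_const_one c) (by simp) (by simp) (sub_ne_zero.2 hc.symm)

theorem stmt_1 (c : ℝ) (hc : c ∈ Set.Ioo (0:ℝ) 1) :
    IsLUB ((fun z : ℝ => (z - z ^ (-c)) / (z - z ^ c)) '' Set.Ioi 1)
      ((1 + c) / (1 - c)) := by
  obtain ⟨hc0, hc1⟩ := hc
  refine isLUB_of_mem_closure ?_ ?_
  · rintro _ ⟨z, hz, rfl⟩
    exact sub_rpow_neg_div_sub_rpow_le hz hc0.le hc1
  · have hlim := (tendsto_sub_rpow_neg_div_sub_rpow hc1.ne).mono_left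
      (nhdsWithin_mono 1 fun z (hz : z ∈ Ioi 1) => ne_of_gt hz)
    exact mem_closure_of_tendsto hlim (eventually_mem_nhdsWithin.mono fun z => mem_image_of_mem _)
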